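/- Let F be a field and M ∈ F with M ≠ 0. Define ψ^M_{t,b} ∈ F² for a tetrahedron t with vertices i<j<k<l and an edge b by: ψ^M_{t,b}=(0,0) if b ⊄ t, and otherwise ψ^M_{t,ij}=(−1,−M⁻¹), ψ^M_{t,ik}=(1−M, M⁻¹), ψ^M_{t,il}=(M,0), ψ^M_{t,jk}=(M,0), ψ^M_{t,jl}=(0,1), ψ^M_{t,kl}=(−M,−1). Let A(M) be the 5×5 matrix over F with rows (0, (M−1)M⁻², M⁻², −M⁻¹, (M−1)M⁻²), (0, M⁻¹, 0, −M⁻¹, M⁻¹), (M⁻¹, (1−M)M⁻², (M−1)M⁻², 0, M⁻²), (M⁻¹, (1−2M)M⁻², (M−1)M⁻², M⁻¹, (1−M)M⁻²), (0, −M⁻¹, M⁻¹, 0, 0). Then for every edge b of the pentachoron 12345, the coloring (x_t,y_t)=ψ^M_{t,b} of its five 3-faces, listed in the order (2345, 1345, 1245, 1235, 1234), satisfies (y_{2345},…,y_{1234})ᵀ = A(M)·(x_{2345},…,x_{1234})ᵀ. Moreover, if −1 ≠ 0 is invertible and M = −1, then A(−1) equals the matrix 𝓡 with rows (0,−2,1,1,−2),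 (0,−1,0,1,−1), (−1,2,−2,0,1), (−1,3,−2,−1,2), (0,1,−1,0,0). -/

import Mathlib

open Finset

/-- The 5×5 integer matrix 𝓡. -/
def Rmat : Matrix (Fin 5) (Fin 5) ℤ :=
  !![0, -2, 1, 1, -2;
     0, -1, 0, 1, -1;
     -1, 2, -2, 0, 1;
     -1, 3, -2, -1, 2;
     0, 1, -1, 0, 0]

/-- The table of 2-columns ψ^M for a tetrahedron with (sorted) vertices indexed by `Fin 4`:
for indices a < c, the value of ψ^M on the edge joining the a-th and the c-th vertex. -/
def psiMPair {F : Type*} [Field F] (M : F) (a c : Fin 4) : F × F :=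
  if a = 0 ∧ c = 1 then (-1, -M⁻¹)
  else if a = 0 ∧ c = 2 then (1 - M, M⁻¹)
  else if a = 0 ∧ c = 3 then (M, 0)
  else if a = 1 ∧ c = 2 then (M, 0)
  else if a = 1 ∧ c = 3 then (0, 1)
  else if a = 2 ∧ c = 3 then (-M, -1)
  else (0, 0)

/-- ψ^M_{t,b} for a tetrahedron `t` (4-element subset of the vertex set) and an edge `b`:
zero when `b ⊄ t`, and the corresponding table value otherwise. -/
def psiM {F : Type*} [Field F] (M : F) {V : Type*} [LinearOrder V]
    (t : Finset V) (ht : t.card = 4) (b : Finset V) : F × F :=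
  ∑ a : Fin 4, ∑ c : Fin 4,
    if a < c ∧ b = {t.orderEmbOfFin ht a, t.orderEmbOfFin ht c} then psiMPair M a c else 0

/-- The coloring assigning ψ^M_{t,b} to every tetrahedron `t`. -/
def XiM {F : Type*} [Field F] (M : F) {V : Type*} [LinearOrder V] (b : Finset V) :
    Finset V → F × F :=
  fun t => if ht : t.card = 4 then psiM M t ht b else 0

/-- The i-th vertex (in increasing order) of a pentachoron `u`. -/
def pentVert {V : Type*} [LinearOrder V] (u : Finset V) (hu : u.card = 5) (i : Fin 5) : V :=
  u.orderEmbOfFin hu i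

/-- The i-th tetrahedral 3-face of a pentachoron `u`: it omits the i-th vertex. -/
def pentFace {V : Type*} [LinearOrder V] (u : Finset V) (hu : u.card = 5) (i : Fin 5) :
    Finset V :=
  u.erase (pentVert u hu i)

/-- The 5×5 matrix A(M). -/
def Amat {F : Type*} [Field F] (M : F) : Matrix (Fin 5) (Fin 5) F :=
  !![0, (M - 1) * M⁻¹ ^ 2, M⁻¹ ^ 2, -M⁻¹, (M - 1) * M⁻¹ ^ 2;
     0, M⁻¹, 0, -M⁻¹, M⁻¹;
     M⁻¹, (1 - M) * M⁻¹ ^ 2, (M - 1) * M⁻¹ ^ 2, 0, M⁻¹ ^ 2;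
     M⁻¹, (1 - 2 * M) * M⁻¹ ^ 2, (M - 1) * M⁻¹ ^ 2, M⁻¹, (1 - M) * M⁻¹ ^ 2;
     0, -M⁻¹, M⁻¹, 0, 0]

lemma card_univ_fin5 : (univ : Finset (Fin 5)).card = 5 := by simp


/-! The `k`-th vertex of the face of `12345` omitting vertex `i` is `i.succAbove k`, so on each
face the coloring by an edge is read off the table `psiMPair`. The relation `y = A(M) x` is then
an identity of rational functions in `M`, checked edge by edge and row by row. -/

lemma pentVert_univ (i : Fin 5) : pentVert (univ : Finset (Fin 5)) card_univ_fin5 i = i :=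
  congrFun (orderEmbOfFin_unique card_univ_fin5 (fun _ => mem_univ _) strictMono_id).symm i

lemma pentFace_univ (i : Fin 5) :
    pentFace (univ : Finset (Fin 5)) card_univ_fin5 i = {i}ᶜ := by
  rw [pentFace, pentVert_univ, compl_singleton]

lemma XiM_pentFace_univ {F : Type*} [Field F] (M : F) (b : Finset (Fin 5)) (i : Fin 5) :
    XiM M b (pentFace (univ : Finset (Fin 5)) card_univ_fin5 i) =
      ∑ a : Fin 4, ∑ c : Fin 4,
        if a < c ∧ b = {i.succAbove a, i.succAbove c} then psiMPair M a c else 0 := by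
  have hcard : ({i}ᶜ : Finset (Fin 5)).card = 4 := by simp [card_compl]
  rw [pentFace_univ, XiM, dif_pos hcard]
  simp [psiM]

set_option maxHeartbeats 1000000 in
lemma XiM_pair_snd_eq_Amat_mul {F : Type*} [Field F] {M : F} (hM : M ≠ 0) {x y : Fin 5}
    (hxy : x < y) (i : Fin 5) :
    (XiM M {x, y} (pentFace (univ : Finset (Fin 5)) card_univ_fin5 i)).2 =
      ∑ j : Fin 5, Amat M i j *
        (XiM M {x, y} (pentFace (univ : Finset (Fin 5)) card_univ_fin5 j)).1 := by
  simp only [XiM_pentFace_univ, Fin.sum_univ_four, Fin.sum_univ_five]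
  fin_cases x <;> fin_cases y <;> (try exact absurd hxy (by decide)) <;> fin_cases i <;>
    simp +decide [psiMPair, Amat] <;> field_simp <;> ring

lemma Amat_neg_one_apply {F : Type*} [Field F] (i j : Fin 5) :
    Amat (-1 : F) i j = (Rmat i j : F) := by
  fin_cases i <;> fin_cases j <;> norm_num [Amat, Rmat]

/-- for every field F and M ≠ 0, for every edge b of the pentachoron 12345
(vertex set `Fin 5`), the coloring t ↦ ψ^M_{t,b} of its five 3-faces satisfies
y = A(M)·x; moreover, if −1 ≠ 0 (so −1 is invertible) and M = −1, then A(−1) = 𝓡. -/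
theorem statement9 (F : Type*) [Field F] (M : F) (hM : M ≠ 0) :
    (∀ b : Finset (Fin 5), b.card = 2 → ∀ i : Fin 5,
      (XiM M b (pentFace (univ : Finset (Fin 5)) card_univ_fin5 i)).2 =
        ∑ j : Fin 5, Amat M i j *
          (XiM M b (pentFace (univ : Finset (Fin 5)) card_univ_fin5 j)).1) ∧
    ((-1 : F) ≠ 0 → M = -1 → ∀ i j : Fin 5, Amat M i j = (Rmat i j : F)) := by
  refine ⟨fun b hb => ?_, fun _ hM1 => hM1 ▸ Amat_neg_one_apply⟩
  obtain ⟨x, y, hxy, rfl⟩ := card_eq_two.mp hb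
  rcases hxy.lt_or_gt with hlt | hgt
  · exact XiM_pair_snd_eq_Amat_mul hM hlt
  · rw [pair_comm]
    exact XiM_pair_snd_eq_Amat_mul hM hgt
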